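/- arXiv:2103.01660 — 2 statements merged into one kernel-verified Lean document; each statement's English description precedes it below -/
import Mathlib

section
/- The area of the triangle with vertices p_i, p_j, p_l in ℝ² equals half the absolute value of the cross product of the vectors p_l − p_i and p_j − p_i. -/
open Finset

/-- 2D cross product of two vectors. -/
def cross2 (a b : ℝ × ℝ) : ℝ := a.1 * b.2 - a.2 * b.1

/-- `(a, b, c)` makes a strict left (counterclockwise) turn. -/
def leftTurn (a b c : ℝ × ℝ) : Prop := 0 < cross2 (b - a) (c - a)

/-- Cyclic successor index. -/
def nxt {w : ℕ} (k : Fin w) : Fin w :=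
  ⟨(k.val + 1) % w, Nat.mod_lt _ (Nat.lt_of_le_of_lt (Nat.zero_le _) k.isLt)⟩

/-- A convex polygon in counterclockwise order: every cyclically consecutive
triple of vertices makes a strict left turn. -/
def ConvexCCW {w : ℕ} (p : Fin w → ℝ × ℝ) : Prop :=
  ∀ k : Fin w, leftTurn (p k) (p (nxt k)) (p (nxt (nxt k)))

/-- No three of the given points are collinear. -/
def NoThreeCollinear {w : ℕ} (p : Fin w → ℝ × ℝ) : Prop :=
  ∀ a b c : Fin w, a ≠ b → b ≠ c → a ≠ c → cross2 (p b - p a) (p c - p a) ≠ 0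

/-- Signed area of a polygon by the shoelace formula (positive for CCW order). -/
noncomputable def shoelace {w : ℕ} (p : Fin w → ℝ × ℝ) : ℝ :=
  (∑ k : Fin w, cross2 (p k) (p (nxt k))) / 2

/-- Perimeter of a polygon: sum of Euclidean lengths of its cyclic edges. -/
noncomputable def perim {w : ℕ} (p : Fin w → ℝ × ℝ) : ℝ :=
  ∑ k : Fin w, dist (p k) (p (nxt k))

/-- The vertices (extreme points) of the convex hull of a finite planar set. -/
noncomputable def hullVertices (S : Finset (ℝ × ℝ)) : Finset (ℝ × ℝ) :=
  @Finset.filter _ (fun x => x ∉ convexHull ℝ ((S.erase x : Finset (ℝ × ℝ)) : Set (ℝ × ℝ)))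
    (fun _ => Classical.propDecidable _) S

/-- Area of the triangle `a b c`: half the absolute value of a cross product. -/
noncomputable def triArea (a b c : ℝ × ℝ) : ℝ := |cross2 (c - a) (b - a)| / 2

/-- List version of `ConvexCCW`. -/
def ConvexPolyL (l : List (ℝ × ℝ)) : Prop :=
  ConvexCCW (fun k : Fin l.length => l.get k)

open MeasureTheory Pointwise

def stdTriangle : Set (ℝ × ℝ) := {p | 0 ≤ p.1 ∧ 0 ≤ p.2 ∧ p.1 + p.2 ≤ 1}

theorem convexHull_stdTriangle_vertices :
    convexHull ℝ {(0, 0), (1, 0), (0, 1)} = stdTriangle := by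
  apply le_antisymm
  · refine convexHull_min ?_ ?_
    · rintro p (rfl | rfl | rfl) <;> norm_num [stdTriangle]
    · rintro x ⟨hx1, hx2, hx3⟩ y ⟨hy1, hy2, hy3⟩ s t hs ht hst
      simp only [stdTriangle, Set.mem_ofPred_eq, Prod.fst_add, Prod.snd_add, Prod.smul_fst,
        Prod.smul_snd, smul_eq_mul]
      exact ⟨by positivity, by positivity, by nlinarith⟩
  · rintro p ⟨h1, h2, h3⟩
    have hcomb := (convex_convexHull ℝ ({(0, 0), (1, 0), (0, 1)} : Set (ℝ × ℝ))).sum_mem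
      (t := Finset.univ) (w := ![1 - p.1 - p.2, p.1, p.2]) (z := ![(0, 0), (1, 0), (0, 1)])
      (by intro i _; fin_cases i <;> simp <;> linarith)
      (by
        simp only [Fin.sum_univ_three, Matrix.cons_val_zero, Matrix.cons_val_one, Matrix.cons_val]
        ring)
      (by intro i _; fin_cases i <;> apply subset_convexHull <;> simp)
    simpa [Fin.sum_univ_three] using hcomb

theorem measurableSet_stdTriangle : MeasurableSet stdTriangle :=
  (measurableSet_le measurable_const measurable_fst).inter
    ((measurableSet_le measurable_const measurable_snd).inter
      (measurableSet_le (measurable_fst.add measurable_snd) measurable_const))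

theorem preimage_mk_stdTriangle {x : ℝ} (hx : x ∈ Set.Icc 0 1) :
    Prod.mk x ⁻¹' stdTriangle = Set.Icc 0 (1 - x) := by
  ext y
  simp only [stdTriangle, Set.mem_preimage, Set.mem_ofPred_eq, Set.mem_Icc]
  constructor
  · rintro ⟨-, hy, hxy⟩
    exact ⟨hy, by linarith⟩
  · rintro ⟨hy, hxy⟩
    exact ⟨hx.1, hy, by linarith⟩

theorem preimage_mk_stdTriangle_of_notMem {x : ℝ} (hx : x ∉ Set.Icc 0 1) :
    Prod.mk x ⁻¹' stdTriangle = ∅ :=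
  Set.eq_empty_of_forall_notMem fun y ⟨hx0, hy, hxy⟩ => hx ⟨hx0, by linarith⟩

theorem volume_stdTriangle : volume stdTriangle = ENNReal.ofReal (1 / 2) := by
  have hsection : ∀ x : ℝ, volume (Prod.mk x ⁻¹' stdTriangle) =
      (Set.Icc 0 1).indicator (fun x => ENNReal.ofReal (1 - x)) x := by
    intro x
    by_cases hx : x ∈ Set.Icc 0 1
    · rw [Set.indicator_of_mem hx, preimage_mk_stdTriangle hx, Real.volume_Icc, sub_zero]
    · rw [Set.indicator_of_notMem hx, preimage_mk_stdTriangle_of_notMem hx, measure_empty]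
  rw [Measure.volume_eq_prod, Measure.prod_apply measurableSet_stdTriangle]
  simp_rw [hsection]
  rw [lintegral_indicator measurableSet_Icc, ← ofReal_integral_eq_lintegral_ofReal]
  · rw [integral_Icc_eq_integral_Ioc, ← intervalIntegral.integral_of_le zero_le_one,
      intervalIntegral.integral_sub intervalIntegrable_const
        intervalIntegral.intervalIntegrable_id]
    norm_num
  · exact (continuous_const.sub continuous_id).integrableOn_Icc
  · filter_upwards [ae_restrict_mem measurableSet_Icc] with x hx
    exact sub_nonneg.2 hx.2

noncomputable def linearMapOfColumns (u v : ℝ × ℝ) : (ℝ × ℝ) →ₗ[ℝ] ℝ × ℝ :=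
  Matrix.toLin (Module.Basis.finTwoProd ℝ) (Module.Basis.finTwoProd ℝ) !![u.1, v.1; u.2, v.2]

theorem linearMapOfColumns_apply (u v x : ℝ × ℝ) :
    linearMapOfColumns u v x = x.1 • u + x.2 • v := by
  simp only [linearMapOfColumns, Matrix.toLin_finTwoProd_apply, Prod.ext_iff, Prod.fst_add,
    Prod.snd_add, Prod.smul_fst, Prod.smul_snd, smul_eq_mul]
  constructor <;> ring

theorem det_linearMapOfColumns (u v : ℝ × ℝ) :
    LinearMap.det (linearMapOfColumns u v) = cross2 u v := by
  rw [linearMapOfColumns, LinearMap.det_toLin, Matrix.det_fin_two_of, cross2]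
  ring

theorem abs_cross2_comm (a b : ℝ × ℝ) : |cross2 a b| = |cross2 b a| := by
  rw [cross2, cross2, abs_sub_comm, mul_comm a.1, mul_comm a.2]

/-- The triangle is the image of `stdTriangle` under `x ↦ a + x.1 • (b - a) + x.2 • (c - a)`,
whose linear part has determinant `cross2 (b - a) (c - a)`. -/
theorem volume_convexHull_triangle (a b c : ℝ × ℝ) :
    volume (convexHull ℝ {a, b, c}) = ENNReal.ofReal (|cross2 (b - a) (c - a)| / 2) := by
  have hvertices : ({a, b, c} : Set (ℝ × ℝ)) =
      a +ᵥ linearMapOfColumns (b - a) (c - a) '' {(0, 0), (1, 0), (0, 1)} := by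
    simp [Set.image_insert_eq, linearMapOfColumns_apply, Set.vadd_set_insert,
      Set.vadd_set_singleton]
  rw [hvertices, convexHull_vadd, ← LinearMap.image_convexHull, convexHull_stdTriangle_vertices,
    measure_vadd, Measure.addHaar_image_linearMap, det_linearMapOfColumns, volume_stdTriangle,
    ← ENNReal.ofReal_mul (abs_nonneg _), mul_one_div]

/-- the area (2-dimensional Lebesgue measure of the convex hull)
of the triangle `pᵢ pⱼ pₗ` equals half the absolute value of the cross product
of `pₗ - pᵢ` and `pⱼ - pᵢ`. -/
theorem stmt6 (pi pj pl : ℝ × ℝ) :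
    (MeasureTheory.volume (convexHull ℝ ({pi, pj, pl} : Set (ℝ × ℝ)))).toReal =
      |cross2 (pl - pi) (pj - pi)| / 2 := by
  rw [volume_convexHull_triangle, abs_cross2_comm, ENNReal.toReal_ofReal (by positivity)]
end

section
/- Let two convex polygons A = ⟨p_i, p_j, ..., p_r⟩ and B = ⟨p_i, p_r, ..., p_l⟩ in ℝ² share exactly the edge p_i p_r, with both given in counterclockwise order, and suppose the interior angle at p_r formed by concatenating A and B is convex (counterclockwise turn) and likewise at p_i. Then the concatenation ⟨p_i, p_j, ..., p_r, ..., p_l⟩ is a convex polygon whose area is area(A) + area(B). -/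
/-!
Index every polygon cyclically by natural numbers cast into `Fin w`. The concatenation `C` then
reads `A` at the indices `0, …, a - 1` and `B`, shifted by `a - 2`, at `a - 1, …, a + b - 2`
(the last one wrapping around to `pᵢ`). So every consecutive triple of `C` is a triple of `A`, a
triple of `B`, or one of the two junction turns at `pᵣ` and `pᵢ`. The shoelace sum of `C` splits
the same way into those of `A` and `B`, except for the two terms of the shared edge, traversed as
`pᵣ → pᵢ` in `A` and `pᵢ → pᵣ` in `B`, which cancel since `cross2` is antisymmetric.
-/

open Finset

open Fin.NatCast

theorem Fin.mk_eq_natCast {w i : ℕ} [NeZero w] (h : i < w) : (⟨i, h⟩ : Fin w) = i :=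
  Fin.ext (Fin.val_cast_of_lt h).symm

section CyclicIndex

variable {w : ℕ} [NeZero w]

theorem nxt_eq_add_one (k : Fin w) : nxt k = k + 1 := by
  ext
  simp [nxt, Fin.val_add]

theorem ConvexCCW.leftTurn_natCast {p : Fin w → ℝ × ℝ} (h : ConvexCCW p) (i : ℕ) :
    leftTurn (p i) (p ↑(i + 1)) (p ↑(i + 2)) := by
  simpa [nxt_eq_add_one, add_assoc, one_add_one_eq_two] using h i

theorem ConvexCCW.of_forall_lt {p : Fin w → ℝ × ℝ}
    (h : ∀ i < w, leftTurn (p i) (p ↑(i + 1)) (p ↑(i + 2))) : ConvexCCW p := by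
  intro k
  simpa [nxt_eq_add_one, add_assoc, one_add_one_eq_two] using h k k.isLt

theorem shoelace_eq_sum_range (p : Fin w → ℝ × ℝ) :
    shoelace p = (∑ i ∈ range w, cross2 (p i) (p ↑(i + 1))) / 2 := by
  rw [shoelace, ← Fin.sum_univ_eq_sum_range]
  simp [nxt_eq_add_one]

end CyclicIndex

theorem sum_range_cross2_concat (c α β : ℕ → ℝ × ℝ) {m k : ℕ} (hα : ∀ i ≤ m, c i = α i)
    (hβ : ∀ j ≤ k, c (m + j) = β (j + 1)) (hαβ : α (m + 1) = β 0) :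
    ∑ i ∈ range (m + k), cross2 (c i) (c (i + 1)) =
      ∑ i ∈ range (m + 1), cross2 (α i) (α (i + 1)) +
        ∑ j ∈ range (k + 1), cross2 (β j) (β (j + 1)) := by
  have hαm : α m = β 1 := by rw [← hα m le_rfl, ← hβ 0 k.zero_le, add_zero]
  have hcancel : cross2 (α m) (α (m + 1)) + cross2 (β 0) (β 1) = 0 := by
    rw [hαm, hαβ]
    simp only [cross2]
    ring
  have hαsum : ∑ i ∈ range m, cross2 (c i) (c (i + 1)) =
      ∑ i ∈ range m, cross2 (α i) (α (i + 1)) :=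
    sum_congr rfl fun i hi => by
      rw [mem_range] at hi
      rw [hα i hi.le, hα (i + 1) hi]
  have hβsum : ∑ j ∈ range k, cross2 (c (m + j)) (c (m + j + 1)) =
      ∑ j ∈ range k, cross2 (β (j + 1)) (β (j + 1 + 1)) :=
    sum_congr rfl fun j hj => by
      rw [mem_range] at hj
      rw [hβ j hj.le, add_assoc, hβ (j + 1) hj]
  rw [sum_range_add, sum_range_succ, sum_range_succ', hαsum, hβsum, zero_add]
  linear_combination -hcancel

theorem shoelace_concat {a b n : ℕ} [NeZero a] [NeZero b] [NeZero n] (hn : a - 1 + (b - 1) = n)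
    {A : Fin a → ℝ × ℝ} {B : Fin b → ℝ × ℝ} {C : Fin n → ℝ × ℝ}
    (hA : ∀ i < a, C i = A i) (hB : ∀ j < b, C ↑(a - 1 + j) = B ↑(j + 1)) :
    shoelace C = shoelace A + shoelace B := by
  obtain ⟨m, rfl⟩ : ∃ m, a = m + 1 := Nat.exists_eq_succ_of_ne_zero (NeZero.ne a)
  obtain ⟨k, rfl⟩ : ∃ k, b = k + 1 := Nat.exists_eq_succ_of_ne_zero (NeZero.ne b)
  simp only [Nat.add_sub_cancel] at hn hB
  subst hn
  have hclose : A ↑(m + 1) = B ↑(0 : ℕ) := calc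
    A ↑(m + 1) = C 0 := by simpa using (hA 0 m.succ_pos).symm
    _ = C ↑(m + k) := by rw [Fin.natCast_self]
    _ = B ↑(0 : ℕ) := by simpa using hB k k.lt_succ_self
  rw [shoelace_eq_sum_range, shoelace_eq_sum_range, shoelace_eq_sum_range, ← add_div,
    sum_range_cross2_concat (fun i ↦ C i) (fun i ↦ A i) (fun i ↦ B i)
      (fun i hi ↦ hA i (Nat.lt_succ_of_le hi)) (fun j hj ↦ hB j (Nat.lt_succ_of_le hj)) hclose]

theorem ConvexCCW.concat {a b n : ℕ} [NeZero a] [NeZero b] [NeZero n] (ha : 2 ≤ a) (hb : 2 ≤ b)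
    (hn : a - 1 + (b - 1) = n) {A : Fin a → ℝ × ℝ} {B : Fin b → ℝ × ℝ} {C : Fin n → ℝ × ℝ}
    (hA : ∀ i < a, C i = A i) (hB : ∀ j < b, C ↑(a - 1 + j) = B ↑(j + 1))
    (hAconv : ConvexCCW A) (hBconv : ConvexCCW B)
    (hturnr : leftTurn (A ↑(a - 2)) (A ↑(a - 1)) (B 2))
    (hturni : leftTurn (B ↑(b - 1)) (A 0) (A 1)) :
    ConvexCCW C := by
  obtain ⟨m, rfl⟩ : ∃ m, a = m + 1 := ⟨a - 1, by omega⟩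
  obtain ⟨k, rfl⟩ : ∃ k, b = k + 1 := ⟨b - 1, by omega⟩
  simp only [Nat.add_sub_cancel] at hn hB hturnr hturni
  subst hn
  refine ConvexCCW.of_forall_lt fun i hik => ?_
  rcases lt_or_ge (i + 2) (m + 1) with hiA | hiB
  · rw [hA i (by omega), hA (i + 1) (by omega), hA (i + 2) hiA]
    exact hAconv.leftTurn_natCast i
  rcases Nat.lt_or_ge i m with him | him
  · obtain rfl : m = i + 1 := by omega
    have hC : C ↑(i + 2) = B 2 := hB 1 (by omega)
    rw [hA i (by omega), hA (i + 1) (by omega), hC]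
    simpa using hturnr
  obtain ⟨j, rfl⟩ : ∃ j, i = m + j := ⟨i - m, by omega⟩
  rcases Nat.lt_or_ge (j + 1) k with hjk | hjk
  · have hC1 : C ↑(m + j + 1) = B ↑(j + 2) := hB (j + 1) (by omega)
    have hC2 : C ↑(m + j + 2) = B ↑(j + 3) := hB (j + 2) (by omega)
    rw [hB j (by omega), hC1, hC2]
    exact hBconv.leftTurn_natCast (j + 1)
  · obtain rfl : k = j + 1 := by omega
    have h0 : ((m + j + 1 : ℕ) : Fin (m + (j + 1))) = 0 :=
      Fin.natCast_eq_zero.2 (dvd_of_eq (by ring))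
    have h1 : ((m + j + 2 : ℕ) : Fin (m + (j + 1))) = 1 := by
      rw [show m + j + 2 = m + j + 1 + 1 from rfl, Nat.cast_succ, h0, zero_add]
    have hC0 : C 0 = A 0 := by simpa using hA 0 (by omega)
    have hC1 : C 1 = A 1 := by simpa using hA 1 (by omega)
    rw [hB j (by omega), h0, h1, hC0, hC1]
    simpa using hturni

/-- concatenating two CCW convex polygons sharing exactly the edge
`pᵢ pᵣ`, with convex turns at `pᵢ` and `pᵣ`, yields a CCW convex polygon whose
area is the sum of the two areas. -/
theorem stmt8 {a b : ℕ} (ha : 3 ≤ a) (hb : 3 ≤ b)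
    (A : Fin a → ℝ × ℝ) (B : Fin b → ℝ × ℝ)
    (hAconv : ConvexCCW A) (hBconv : ConvexCCW B)
    -- the two polygons share exactly the edge pᵢ pᵣ, where
    -- pᵢ = A 0 = B 0 and pᵣ = A (a-1) = B 1
    (hshare0 : B ⟨0, by omega⟩ = A ⟨0, by omega⟩)
    (hshare1 : B ⟨1, by omega⟩ = A ⟨a - 1, by omega⟩)
    -- convex (CCW) interior angles at the concatenation vertices pᵣ and pᵢ
    (hturnr : leftTurn (A ⟨a - 2, by omega⟩) (A ⟨a - 1, by omega⟩) (B ⟨2, by omega⟩))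
    (hturni : leftTurn (B ⟨b - 1, by omega⟩) (A ⟨0, by omega⟩) (A ⟨1, by omega⟩))
    -- the concatenated polygon ⟨pᵢ, pⱼ, …, pᵣ, …, pₗ⟩
    (Cc : Fin (a + b - 2) → ℝ × ℝ)
    (hC1 : ∀ k : Fin (a + b - 2), ∀ hk : k.val < a, Cc k = A ⟨k.val, hk⟩)
    (hC2 : ∀ k : Fin (a + b - 2), ∀ hk : a ≤ k.val,
      Cc k = B ⟨k.val - a + 2, by have := k.isLt; omega⟩) :
    ConvexCCW Cc ∧ shoelace Cc = shoelace A + shoelace B := by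
  have : NeZero a := ⟨by omega⟩
  have : NeZero b := ⟨by omega⟩
  have : NeZero (a + b - 2) := ⟨by omega⟩
  have hA : ∀ i < a, Cc i = A i := fun i hi ↦ by
    rw [← Fin.mk_eq_natCast (by omega), hC1 _ hi, Fin.mk_eq_natCast]
  have hB : ∀ j < b, Cc ↑(a - 1 + j) = B ↑(j + 1) := by
    intro j hj
    rcases Nat.eq_zero_or_pos j with rfl | hj0
    · simpa [hA (a - 1) (by omega), Fin.mk_eq_natCast] using hshare1.symm
    rcases Nat.lt_or_ge j (b - 1) with hjb | hjb
    · rw [← Fin.mk_eq_natCast (by omega), hC2 _ (by dsimp only; omega), Fin.mk_eq_natCast]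
      congr 2
      dsimp only
      omega
    · obtain rfl : j = b - 1 := by omega
      have hC0 : Cc ↑(a - 1 + (b - 1)) = Cc 0 :=
        congrArg Cc (Fin.natCast_eq_zero.2 (dvd_of_eq (by omega)))
      have hB0 : B ↑(b - 1 + 1) = B 0 := congrArg B (Fin.natCast_eq_zero.2 (dvd_of_eq (by omega)))
      rw [hC0, hB0]
      simpa [Fin.mk_eq_natCast] using (hA 0 (by omega)).trans hshare0.symm
  simp only [Fin.mk_eq_natCast] at hturnr hturni
  exact ⟨ConvexCCW.concat (by omega) (by omega) (by omega) hA hB hAconv hBconv hturnr hturni,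
    shoelace_concat (by omega) hA hB⟩
end
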